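/- Let S be a finite set with at least two elements, P a row-stochastic S × S real matrix, μ an invariant probability vector for P (nonnegative entries summing to 1 with μ P = μ), and m ≥ 1. Let r(V^{(m)}) := max{|z| : z ∈ ℂ is an eigenvalue of V^{(m)}}. Then for every x ∈ S, limsup_{n→∞} (Σ_{y∈S} |(P^n)(x, y) − μ(y)|)^{1/n} ≤ (r(V^{(m)}))^{1/m}. -/

import Mathlib

open Filter

/-- The `overlap coefficient` of rows `x1` and `x2` of the matrix `Q`:
`α(x1,x2) := ∑_y min(Q(x1,y), Q(x2,y))`. -/
noncomputable def mdCoeff {S : Type*} [Fintype S] (Q : Matrix S S ℝ) (x1 x2 : S) : ℝ :=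
  ∑ y, min (Q x1 y) (Q x2 y)

/-- The coupling matrix `V` associated with the transition matrix `Q`, indexed
by pairs of states. -/
noncomputable def couplingMatrix {S : Type*} [Fintype S] [DecidableEq S]
    (Q : Matrix S S ℝ) : Matrix (S × S) (S × S) ℝ :=
  fun p q =>
    if p.1 = p.2 ∨ mdCoeff Q p.1 p.2 = 1 then 0
    else (Q p.1 q.1 - min (Q p.1 q.1) (Q p.2 q.1)) *
         (Q p.2 q.2 - min (Q p.1 q.2) (Q p.2 q.2)) / (1 - mdCoeff Q p.1 p.2)

open Topology

set_option linter.unusedSectionVars false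
set_option linter.unusedVariables false

section aux
variable {S : Type*} [Fintype S] [DecidableEq S]

lemma pow_entry_nonneg (P : Matrix S S ℝ) (h : ∀ x y, 0 ≤ P x y) (n : ℕ) :
    ∀ x y, 0 ≤ (P ^ n) x y := by
  induction n with
  | zero => intro x y; simp [Matrix.one_apply]; positivity
  | succ n ih =>
      intro x y
      rw [pow_succ, Matrix.mul_apply]
      exact Finset.sum_nonneg fun z _ => mul_nonneg (ih x z) (h z y)

lemma pow_row_sum (P : Matrix S S ℝ) (h : ∀ x, ∑ y, P x y = 1) (n : ℕ) :
    ∀ x, ∑ y, (P ^ n) x y = 1 := by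
  induction n with
  | zero => intro x; simp [Matrix.one_apply]
  | succ n ih =>
      intro x
      simp only [pow_succ, Matrix.mul_apply]
      rw [Finset.sum_comm]
      simp_rw [← Finset.mul_sum, h, mul_one]
      exact ih x

lemma mdCoeff_le_one (Q : Matrix S S ℝ) (h : ∀ x, ∑ y, Q x y = 1) (x1 x2 : S) :
    mdCoeff Q x1 x2 ≤ 1 := by
  rw [mdCoeff, ← h x1]
  exact Finset.sum_le_sum fun y _ => min_le_left _ _

lemma rows_eq_of_mdCoeff_eq_one (Q : Matrix S S ℝ) (h : ∀ x, ∑ y, Q x y = 1)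
    (x1 x2 : S) (hc : mdCoeff Q x1 x2 = 1) : ∀ y, Q x1 y = Q x2 y := by
  have h1 : ∑ y, (Q x1 y - min (Q x1 y) (Q x2 y)) = 0 := by
    rw [Finset.sum_sub_distrib, h x1, ← mdCoeff, hc, sub_self]
  have h2 : ∑ y, (Q x2 y - min (Q x1 y) (Q x2 y)) = 0 := by
    rw [Finset.sum_sub_distrib, h x2, ← mdCoeff, hc, sub_self]
  have e1 := (Finset.sum_eq_zero_iff_of_nonneg
    (fun y _ => sub_nonneg.mpr (min_le_left (Q x1 y) (Q x2 y)))).mp h1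
  have e2 := (Finset.sum_eq_zero_iff_of_nonneg
    (fun y _ => sub_nonneg.mpr (min_le_right (Q x1 y) (Q x2 y)))).mp h2
  intro y
  have a1 := sub_eq_zero.mp (e1 y (Finset.mem_univ y))
  have a2 := sub_eq_zero.mp (e2 y (Finset.mem_univ y))
  exact a1.trans a2.symm

lemma couplingMatrix_nonneg (Q : Matrix S S ℝ) (hrow : ∀ x, ∑ y, Q x y = 1)
    (p q : S × S) : 0 ≤ couplingMatrix Q p q := by
  rw [couplingMatrix]
  split_ifs with h
  · exact le_refl _
  · push_neg at h
    have hβ : 0 < 1 - mdCoeff Q p.1 p.2 := by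
      have := mdCoeff_le_one Q hrow p.1 p.2
      rcases lt_or_eq_of_le this with h' | h'
      · linarith
      · exact absurd h' h.2
    exact div_nonneg (mul_nonneg (sub_nonneg.mpr (min_le_left _ _))
      (sub_nonneg.mpr (min_le_right _ _))) hβ.le

lemma key_step (Q : Matrix S S ℝ) (hQ0 : ∀ x y, 0 ≤ Q x y) (hQ1 : ∀ x, ∑ y, Q x y = 1)
    (n : ℕ) (p : S × S) :
    ∑ z, |(Q ^ (n+1)) p.1 z - (Q ^ (n+1)) p.2 z| ≤
      ∑ q : S × S, couplingMatrix Q p q * (∑ z, |(Q ^ n) q.1 z - (Q ^ n) q.2 z|) := by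
  obtain ⟨x1, x2⟩ := p
  by_cases h : x1 = x2 ∨ mdCoeff Q x1 x2 = 1
  · have hrows : ∀ y, Q x1 y = Q x2 y := by
      rcases h with h | h
      · intro y; rw [h]
      · exact rows_eq_of_mdCoeff_eq_one Q hQ1 x1 x2 h
    have hpow : ∀ z, (Q ^ (n+1)) x1 z = (Q ^ (n+1)) x2 z := by
      intro z
      rw [pow_succ', Matrix.mul_apply, Matrix.mul_apply]
      exact Finset.sum_congr rfl fun y _ => by rw [hrows y]
    have hV : ∀ q : S × S, couplingMatrix Q (x1, x2) q = 0 := fun q => if_pos h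
    simp only [hV, zero_mul, Finset.sum_const_zero]
    apply le_of_eq
    apply Finset.sum_eq_zero
    intro z _
    rw [hpow z, sub_self, abs_zero]
  · push_neg at h
    obtain ⟨hne, hα⟩ := h
    set a : S → ℝ := fun y => min (Q x1 y) (Q x2 y) with ha
    set b1 : S → ℝ := fun y => Q x1 y - a y with hb1
    set b2 : S → ℝ := fun y => Q x2 y - a y with hb2
    set β : ℝ := 1 - mdCoeff Q x1 x2 with hβ
    have hβpos : 0 < β := by
      have := mdCoeff_le_one Q hQ1 x1 x2
      rw [hβ]
      rcases lt_or_eq_of_le this with h' | h'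
      · linarith
      · exact absurd h' hα
    have hs1 : ∑ y, b1 y = β := by
      simp only [hb1, Finset.sum_sub_distrib, hQ1 x1, hβ, mdCoeff, ha]
    have hs2 : ∑ y, b2 y = β := by
      simp only [hb2, Finset.sum_sub_distrib, hQ1 x2, hβ, mdCoeff, ha]
    have hVv : ∀ q : S × S, couplingMatrix Q (x1, x2) q = b1 q.1 * b2 q.2 / β := by
      intro q
      rw [couplingMatrix, if_neg (by push_neg; exact ⟨hne, hα⟩)]
    have hident : ∀ z, (Q ^ (n+1)) x1 z - (Q ^ (n+1)) x2 z =
        ∑ q : S × S, (b1 q.1 * b2 q.2 / β) * ((Q ^ n) q.1 z - (Q ^ n) q.2 z) := by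
      intro z
      set c : S → ℝ := fun y => (Q ^ n) y z with hc
      have t1 : ∑ y1, ∑ y2, b1 y1 * b2 y2 * c y1 = (∑ y, b1 y * c y) * (∑ y, b2 y) := by
        rw [Finset.sum_mul_sum]
        exact Finset.sum_congr rfl fun y1 _ => Finset.sum_congr rfl fun y2 _ => by ring
      have t2 : ∑ y1, ∑ y2, b1 y1 * b2 y2 * c y2 = (∑ y, b1 y) * (∑ y, b2 y * c y) := by
        rw [Finset.sum_mul_sum]
        exact Finset.sum_congr rfl fun y1 _ => Finset.sum_congr rfl fun y2 _ => by ring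
      have key : ∑ q : S × S, (b1 q.1 * b2 q.2) * ((c q.1) - (c q.2)) =
          β * ((Q ^ (n+1)) x1 z - (Q ^ (n+1)) x2 z) := by
        rw [Fintype.sum_prod_type]
        simp_rw [mul_sub]
        simp only [Finset.sum_sub_distrib]
        rw [t1, t2, hs1, hs2]
        rw [show (Q ^ (n+1)) x1 z = ∑ y, Q x1 y * c y from by
          rw [pow_succ', Matrix.mul_apply],
          show (Q ^ (n+1)) x2 z = ∑ y, Q x2 y * c y from by
          rw [pow_succ', Matrix.mul_apply]]
        simp only [hb1, hb2, sub_mul, Finset.sum_sub_distrib]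
        ring
      have : ∑ q : S × S, (b1 q.1 * b2 q.2 / β) * (c q.1 - c q.2)
          = (∑ q : S × S, (b1 q.1 * b2 q.2) * (c q.1 - c q.2)) / β := by
        rw [Finset.sum_div]
        exact Finset.sum_congr rfl fun q _ => by ring
      rw [this, key, mul_div_cancel_left₀ _ (ne_of_gt hβpos)]
    calc ∑ z, |(Q ^ (n+1)) x1 z - (Q ^ (n+1)) x2 z|
        ≤ ∑ z, ∑ q : S × S, (b1 q.1 * b2 q.2 / β) * |(Q ^ n) q.1 z - (Q ^ n) q.2 z| := by
          refine Finset.sum_le_sum fun z _ => ?_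
          rw [hident z]
          refine (Finset.abs_sum_le_sum_abs _ _).trans (le_of_eq ?_)
          refine Finset.sum_congr rfl fun q _ => ?_
          rw [abs_mul]
          congr 1
          have h1 : 0 ≤ b1 q.1 := sub_nonneg.mpr (min_le_left _ _)
          have h2 : 0 ≤ b2 q.2 := sub_nonneg.mpr (min_le_right _ _)
          exact abs_of_nonneg (div_nonneg (mul_nonneg h1 h2) hβpos.le)
      _ = ∑ q : S × S, couplingMatrix Q (x1, x2) q * (∑ z, |(Q ^ n) q.1 z - (Q ^ n) q.2 z|) := by
          rw [Finset.sum_comm]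
          exact Finset.sum_congr rfl fun q _ => by rw [hVv q, Finset.mul_sum]

end aux

section aux3
variable {S : Type*} [Fintype S] [DecidableEq S]

lemma mulVec_apply' (M : Matrix (S × S) (S × S) ℝ) (v : (S × S) → ℝ) (p : S × S) :
    M.mulVec v p = ∑ q, M p q * v q := by
  simp [Matrix.mulVec, dotProduct]

lemma key_iter (Q : Matrix S S ℝ) (hQ0 : ∀ x y, 0 ≤ Q x y) (hQ1 : ∀ x, ∑ y, Q x y = 1)
    (n : ℕ) (p : S × S) :
    ∑ z, |(Q ^ n) p.1 z - (Q ^ n) p.2 z| ≤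
      2 * ((couplingMatrix Q ^ n).mulVec (fun _ => (1:ℝ))) p := by
  induction n generalizing p with
  | zero =>
      rw [show (couplingMatrix Q) ^ 0 = 1 from pow_zero _, Matrix.one_mulVec]
      calc ∑ z, |(Q ^ 0) p.1 z - (Q ^ 0) p.2 z|
          ≤ ∑ z, ((Q ^ 0) p.1 z + (Q ^ 0) p.2 z) := by
            refine Finset.sum_le_sum fun z _ => ?_
            refine (abs_sub _ _).trans ?_
            rw [abs_of_nonneg (pow_entry_nonneg Q hQ0 0 _ _),
              abs_of_nonneg (pow_entry_nonneg Q hQ0 0 _ _)]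
        _ = 2 * 1 := by
            rw [Finset.sum_add_distrib, pow_row_sum Q hQ1 0, pow_row_sum Q hQ1 0]
            norm_num
  | succ n ih =>
      refine (key_step Q hQ0 hQ1 n p).trans ?_
      have step : ∀ q : S × S, couplingMatrix Q p q * (∑ z, |(Q ^ n) q.1 z - (Q ^ n) q.2 z|)
          ≤ couplingMatrix Q p q * (2 * ((couplingMatrix Q ^ n).mulVec (fun _ => (1:ℝ))) q) :=
        fun q => mul_le_mul_of_nonneg_left (ih q) (couplingMatrix_nonneg Q hQ1 p q)
      refine (Finset.sum_le_sum fun q _ => step q).trans (le_of_eq ?_)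
      rw [pow_succ', ← Matrix.mulVec_mulVec, mulVec_apply', Finset.mul_sum]
      exact Finset.sum_congr rfl fun q _ => by ring

end aux3

attribute [local instance] Matrix.linftyOpNormedRing Matrix.linftyOpNormedAlgebra

section main

local instance matCS {T : Type*} [Fintype T] [DecidableEq T] :
    CompleteSpace (Matrix T T ℂ) := FiniteDimensional.complete ℂ _

lemma spectrum_to_eigen {T : Type*} [Fintype T] [DecidableEq T]
    (A : Matrix T T ℂ) (z : ℂ) (hz : z ∈ spectrum ℂ A) :
    ∃ v : T → ℂ, v ≠ 0 ∧ A.mulVec v = z • v := by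
  rw [spectrum.mem_iff] at hz
  have hdet : (Matrix.det (algebraMap ℂ (Matrix T T ℂ) z - A)) = 0 := by
    by_contra hd
    exact hz ((Matrix.isUnit_iff_isUnit_det _).mpr (isUnit_iff_ne_zero.mpr hd))
  obtain ⟨v, hv0, hv⟩ := (Matrix.exists_mulVec_eq_zero_iff).mpr hdet
  refine ⟨v, hv0, ?_⟩
  rw [Matrix.sub_mulVec] at hv
  have h1 : (algebraMap ℂ (Matrix T T ℂ) z).mulVec v = z • v := by
    rw [Algebra.algebraMap_eq_smul_one, Matrix.smul_mulVec, Matrix.one_mulVec]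
  rw [h1] at hv
  exact (sub_eq_zero.mp hv).symm

/-- **Asymptotic rate of convergence via the spectral radius of `V^{(m)}`.**
For every `x`,
`limsup_n (∑_y |(P^n)(x,y) - μ(y)|)^{1/n} ≤ (r(V^{(m)}))^{1/m}`. -/
theorem asymptotic_rate_le_spectral_radius_pow
    {S : Type*} [Fintype S] [DecidableEq S] [Nontrivial S]
    (P : Matrix S S ℝ)
    (hnonneg : ∀ x y, 0 ≤ P x y) (hrow : ∀ x, ∑ y, P x y = 1)
    (μ : S → ℝ) (hμ0 : ∀ y, 0 ≤ μ y) (hμ1 : ∑ y, μ y = 1)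
    (hinv : ∀ y, ∑ x, μ x * P x y = μ y)
    (m : ℕ) (hm : 1 ≤ m)
    (r : ℝ)
    (hr : r = sSup {s : ℝ | ∃ z : ℂ,
      (∃ v : S × S → ℂ, v ≠ 0 ∧
        ((couplingMatrix (P ^ m)).map (fun a => (a : ℂ))).mulVec v = z • v) ∧
      ‖z‖ = s}) :
    ∀ x : S,
      limsup (fun n : ℕ => (∑ y, |(P ^ n) x y - μ y|) ^ ((n : ℝ)⁻¹)) atTop
        ≤ r ^ ((m : ℝ)⁻¹) := by
  intro x
  have hm0 : 0 < m := hm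
  have hmR : (0:ℝ) < m := by exact_mod_cast hm0
  set Q : Matrix S S ℝ := P ^ m with hQdef
  have hQ0 : ∀ a b, 0 ≤ Q a b := pow_entry_nonneg P hnonneg m
  have hQ1 : ∀ a, ∑ y, Q a y = 1 := pow_row_sum P hrow m
  set V : Matrix (S × S) (S × S) ℝ := couplingMatrix Q with hVdef
  set A : Matrix (S × S) (S × S) ℂ := V.map (fun a => (a : ℂ)) with hAdef
  have hApow : ∀ n : ℕ, A ^ n = (V ^ n).map (fun a => (a : ℂ)) := by
    intro n
    have h1 : A = (Complex.ofRealHom.mapMatrix : Matrix (S×S) (S×S) ℝ →+* Matrix (S×S) (S×S) ℂ) V := rfl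
    have h2 : (V ^ n).map (fun a => (a : ℂ)) =
        (Complex.ofRealHom.mapMatrix : Matrix (S×S) (S×S) ℝ →+* Matrix (S×S) (S×S) ℂ) (V ^ n) := rfl
    rw [h1, h2, map_pow]
  -- row sums of powers of V are bounded by ‖A ^ n‖
  have hrowA : ∀ (n : ℕ) (p : S × S), ((V ^ n).mulVec (fun _ => (1:ℝ))) p ≤ ‖A ^ n‖ := by
    intro n p
    have hcast : ((A ^ n).mulVec (fun _ => (1:ℂ))) p = (((V ^ n).mulVec (fun _ => (1:ℝ))) p : ℝ) := by
      rw [hApow n]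
      simp [Matrix.mulVec, dotProduct, Matrix.map_apply]
    calc ((V ^ n).mulVec (fun _ => (1:ℝ))) p ≤ |((V ^ n).mulVec (fun _ => (1:ℝ))) p| := le_abs_self _
      _ = ‖((A ^ n).mulVec (fun _ => (1:ℂ))) p‖ := by rw [hcast, Complex.norm_real]; rfl
      _ ≤ ‖(A ^ n).mulVec (fun _ => (1:ℂ))‖ := norm_le_pi_norm _ p
      _ ≤ ‖A ^ n‖ * ‖(fun _ => (1:ℂ) : S × S → ℂ)‖ := Matrix.linfty_opNorm_mulVec _ _
      _ = ‖A ^ n‖ := by rw [pi_norm_const]; simp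
  -- the TV distance sequence
  set f : ℕ → ℝ := fun n => ∑ y, |(P ^ n) x y - μ y| with hfdef
  have hf0 : ∀ n, 0 ≤ f n := fun n => Finset.sum_nonneg fun y _ => abs_nonneg _
  have hfle2 : ∀ n, f n ≤ 2 := by
    intro n
    calc f n ≤ ∑ y, ((P ^ n) x y + μ y) := Finset.sum_le_sum fun y _ => by
          refine (abs_sub _ _).trans ?_
          rw [abs_of_nonneg (pow_entry_nonneg P hnonneg n _ _), abs_of_nonneg (hμ0 y)]
      _ = 2 := by rw [Finset.sum_add_distrib, pow_row_sum P hrow n, hμ1]; norm_num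
  -- invariance for all powers
  have hinvk : ∀ (k : ℕ) (y : S), ∑ x2, μ x2 * (P ^ k) x2 y = μ y := by
    intro k
    induction k with
    | zero =>
        intro y
        simp [Matrix.one_apply, mul_ite, mul_one, mul_zero]
    | succ k ih =>
        intro y
        simp only [pow_succ, Matrix.mul_apply]
        calc ∑ x2, μ x2 * ∑ z, (P ^ k) x2 z * P z y
            = ∑ x2, ∑ z, μ x2 * ((P ^ k) x2 z * P z y) := by simp_rw [Finset.mul_sum]
          _ = ∑ z, ∑ x2, μ x2 * ((P ^ k) x2 z * P z y) := Finset.sum_comm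
          _ = ∑ z, (∑ x2, μ x2 * (P ^ k) x2 z) * P z y := by
              refine Finset.sum_congr rfl fun z _ => ?_
              rw [Finset.sum_mul]
              exact Finset.sum_congr rfl fun x2 _ => by ring
          _ = μ y := by simp_rw [ih]; exact hinv y
  -- monotonicity
  have hmono : ∀ n, f (n + 1) ≤ f n := by
    intro n
    have hstep : ∀ y, (P ^ (n+1)) x y - μ y = ∑ z, ((P ^ n) x z - μ z) * P z y := by
      intro y
      rw [pow_succ, Matrix.mul_apply]
      simp_rw [sub_mul, Finset.sum_sub_distrib]
      congr 1
      have : μ y = ∑ z, μ z * P z y := (hinv y).symm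
      rw [this]
    calc f (n+1) = ∑ y, |∑ z, ((P ^ n) x z - μ z) * P z y| := by
          exact Finset.sum_congr rfl fun y _ => by rw [hstep y]
      _ ≤ ∑ y, ∑ z, |(P ^ n) x z - μ z| * P z y := by
          refine Finset.sum_le_sum fun y _ => ?_
          refine (Finset.abs_sum_le_sum_abs _ _).trans (le_of_eq ?_)
          exact Finset.sum_congr rfl fun z _ => by rw [abs_mul, abs_of_nonneg (hnonneg z y)]
      _ = f n := by
          rw [Finset.sum_comm]
          simp_rw [← Finset.mul_sum, hrow, mul_one]
          rfl
  have hanti : Antitone f := antitone_nat_of_succ_le hmono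
  -- coupling bound
  have hcoupling : ∀ n : ℕ, f (m * n) ≤ 2 * ‖A ^ n‖ := by
    intro n
    have hQn : P ^ (m * n) = Q ^ n := by rw [hQdef, ← pow_mul]
    have hμQ : ∀ y, ∑ x2, μ x2 * (Q ^ n) x2 y = μ y := by
      intro y
      have := hinvk (m * n) y
      rwa [hQn] at this
    have hpair : ∀ x2 : S, ∑ y, |(Q ^ n) x y - (Q ^ n) x2 y| ≤ 2 * ‖A ^ n‖ := by
      intro x2
      have := key_iter Q hQ0 hQ1 n (x, x2)
      refine this.trans ?_
      have := hrowA n (x, x2)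
      linarith
    calc f (m * n) = ∑ y, |∑ x2, μ x2 * ((Q ^ n) x y - (Q ^ n) x2 y)| := by
          refine Finset.sum_congr rfl fun y _ => ?_
          rw [hQn]
          congr 1
          simp_rw [mul_sub, Finset.sum_sub_distrib, ← Finset.sum_mul, hμ1, one_mul, hμQ y]
      _ ≤ ∑ y, ∑ x2, μ x2 * |(Q ^ n) x y - (Q ^ n) x2 y| := by
          refine Finset.sum_le_sum fun y _ => ?_
          refine (Finset.abs_sum_le_sum_abs _ _).trans (le_of_eq ?_)
          exact Finset.sum_congr rfl fun x2 _ => by rw [abs_mul, abs_of_nonneg (hμ0 x2)]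
      _ = ∑ x2, μ x2 * ∑ y, |(Q ^ n) x y - (Q ^ n) x2 y| := by
          rw [Finset.sum_comm]
          exact Finset.sum_congr rfl fun x2 _ => by rw [Finset.mul_sum]
      _ ≤ ∑ x2, μ x2 * (2 * ‖A ^ n‖) := Finset.sum_le_sum fun x2 _ =>
          mul_le_mul_of_nonneg_left (hpair x2) (hμ0 x2)
      _ = 2 * ‖A ^ n‖ := by rw [← Finset.sum_mul, hμ1, one_mul]
  -- the eigenvalue set
  set E : Set ℝ := {s : ℝ | ∃ z : ℂ,
      (∃ v : S × S → ℂ, v ≠ 0 ∧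
        ((couplingMatrix (P ^ m)).map (fun a => (a : ℂ))).mulVec v = z • v) ∧
      ‖z‖ = s} with hEdef
  have hEA : ∀ s, s ∈ E ↔ ∃ z : ℂ, (∃ v : S × S → ℂ, v ≠ 0 ∧ A.mulVec v = z • v) ∧
      ‖z‖ = s := fun s => Iff.rfl
  have hEbdd : BddAbove E := by
    refine ⟨‖A‖, fun s hs => ?_⟩
    obtain ⟨z, ⟨v, hv0, hv⟩, rfl⟩ := hs
    have hvn : 0 < ‖v‖ := norm_pos_iff.mpr hv0
    have h1 : ‖z‖ * ‖v‖ ≤ ‖A‖ * ‖v‖ := by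
      calc ‖z‖ * ‖v‖ = ‖z • v‖ := (norm_smul z v).symm
        _ = ‖A.mulVec v‖ := by rw [hv]
        _ ≤ ‖A‖ * ‖v‖ := Matrix.linfty_opNorm_mulVec _ _
    have := le_of_mul_le_mul_right h1 hvn
    exact this
  have hE0 : (0:ℝ) ∈ E := by
    obtain ⟨x0⟩ := (inferInstance : Nonempty S)
    have hdet : A.det = 0 := by
      refine Matrix.det_eq_zero_of_row_eq_zero (x0, x0) fun q => ?_
      have : V (x0, x0) q = 0 := if_pos (Or.inl rfl)
      rw [hAdef]
      simp [Matrix.map_apply, this]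
    obtain ⟨v, hv0, hv⟩ := (Matrix.exists_mulVec_eq_zero_iff).mpr hdet
    exact ⟨0, ⟨v, hv0, by rw [hv, zero_smul]⟩, by simp⟩
  have hr0 : 0 ≤ r := hr ▸ le_csSup hEbdd hE0
  -- spectral radius bound
  have hρ : spectralRadius ℂ A ≤ ENNReal.ofReal r := by
    unfold spectralRadius
    refine iSup₂_le fun z hz => ?_
    obtain ⟨v, hv0, hv⟩ := spectrum_to_eigen A z hz
    have hzE : ‖z‖ ∈ E := ⟨z, ⟨v, hv0, hv⟩, rfl⟩
    have hzr : ‖z‖ ≤ r := by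
      have := hr ▸ le_csSup hEbdd hzE
      exact this
    calc (‖z‖₊ : ENNReal) = ENNReal.ofReal ‖z‖ := (ofReal_norm z).symm
      _ ≤ ENNReal.ofReal r := ENNReal.ofReal_le_ofReal hzr
  -- main bound with ε
  set L : ℝ := limsup (fun n : ℕ => f n ^ ((n : ℝ)⁻¹)) atTop with hLdef
  have hub : ∀ᶠ n : ℕ in atTop, f n ^ ((n : ℝ)⁻¹) ≤ 2 := by
    filter_upwards [eventually_ge_atTop 1] with n hn
    have h1 : f n ^ ((n : ℝ)⁻¹) ≤ 2 ^ ((n : ℝ)⁻¹) :=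
      Real.rpow_le_rpow (hf0 n) (hfle2 n) (by positivity)
    refine h1.trans ?_
    calc (2:ℝ) ^ ((n : ℝ)⁻¹) ≤ 2 ^ (1:ℝ) := by
          refine Real.rpow_le_rpow_of_exponent_le one_le_two ?_
          rw [inv_le_one_iff₀]
          right
          exact_mod_cast hn
      _ = 2 := Real.rpow_one 2
  have hLb : IsBoundedUnder (· ≤ ·) atTop (fun n : ℕ => f n ^ ((n : ℝ)⁻¹)) :=
    ⟨2, by simpa using hub⟩
  have hL0 : 0 ≤ L := by
    refine le_limsup_of_frequently_le ?_ hLb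
    exact Frequently.of_forall fun n => Real.rpow_nonneg (hf0 n) _
  have hbound : ∀ ε : ℝ, 0 < ε → L ≤ (r + ε) ^ ((m : ℝ)⁻¹) := by
    intro ε hε
    have hrε : 0 < r + ε := by linarith
    have h1 : limsup (fun n : ℕ => (‖A ^ n‖₊ : ENNReal) ^ (1 / (n:ℝ))) atTop
        < ENNReal.ofReal (r + ε) := by
      refine lt_of_le_of_lt ((spectrum.limsup_pow_nnnorm_pow_one_div_le_spectralRadius A).trans hρ) ?_
      rw [ENNReal.ofReal_lt_ofReal_iff hrε]
      linarith
    have h2 : ∀ᶠ n : ℕ in atTop, (‖A ^ n‖₊ : ENNReal) ^ (1 / (n:ℝ)) < ENNReal.ofReal (r + ε) :=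
      eventually_lt_of_limsup_lt h1
    have h3 : ∀ᶠ n : ℕ in atTop, ‖A ^ n‖ ≤ (r + ε) ^ n := by
      filter_upwards [h2, eventually_ge_atTop 1] with n hn hn1
      have hne : (n : ℝ) ≠ 0 := by positivity
      have hx : (‖A ^ n‖₊ : ENNReal) ≤ (ENNReal.ofReal (r + ε)) ^ n := by
        have step := ENNReal.rpow_le_rpow hn.le (Nat.cast_nonneg n)
        rwa [← ENNReal.rpow_mul, one_div, inv_mul_cancel₀ hne, ENNReal.rpow_one,
          ENNReal.rpow_natCast] at step
      replace hx : ENNReal.ofReal ‖A ^ n‖ ≤ ENNReal.ofReal ((r + ε) ^ n) := by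
        rw [ENNReal.ofReal_pow hrε.le]; exact (ofReal_norm (A ^ n)).trans_le hx
      exact (ENNReal.ofReal_le_ofReal_iff (by positivity)).mp hx
    obtain ⟨N, hN⟩ := eventually_atTop.mp h3
    have h4 : ∀ᶠ n : ℕ in atTop,
        f n ^ ((n : ℝ)⁻¹) ≤ (2 * (r + ε) ^ (n / m)) ^ ((n : ℝ)⁻¹) := by
      filter_upwards [eventually_ge_atTop (m * (N + 1))] with n hn
      have hdiv : N ≤ n / m := by
        have h9 : (N + 1) * m ≤ n := by rwa [Nat.mul_comm] at hn
        have : N + 1 ≤ n / m := (Nat.le_div_iff_mul_le hm0).mpr h9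
        omega
      have hfn : f n ≤ 2 * (r + ε) ^ (n / m) := by
        have h5 : f n ≤ f (m * (n / m)) := hanti (Nat.mul_div_le n m)
        have h6 : f (m * (n / m)) ≤ 2 * ‖A ^ (n / m)‖ := hcoupling (n / m)
        have h7 : ‖A ^ (n / m)‖ ≤ (r + ε) ^ (n / m) := hN _ hdiv
        linarith
      exact Real.rpow_le_rpow (hf0 n) hfn (by positivity)
    -- limit of RHS
    have h5 : Tendsto (fun n : ℕ => (2 * (r + ε) ^ (n / m)) ^ ((n : ℝ)⁻¹)) atTop
        (𝓝 ((r + ε) ^ ((m : ℝ)⁻¹))) := by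
      have heq : ∀ᶠ n : ℕ in atTop, (2 * (r + ε) ^ (n / m)) ^ ((n : ℝ)⁻¹)
          = 2 ^ ((n : ℝ)⁻¹) * (r + ε) ^ ((↑(n / m) : ℝ) * (n : ℝ)⁻¹) := by
        filter_upwards [eventually_ge_atTop 1] with n hn
        rw [Real.mul_rpow (by norm_num) (by positivity),
          ← Real.rpow_natCast (r + ε) (n / m), ← Real.rpow_mul hrε.le]
      have hexp : Tendsto (fun n : ℕ => (↑(n / m) : ℝ) * (n : ℝ)⁻¹) atTop (𝓝 ((m : ℝ)⁻¹)) := by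
        have hlow : Tendsto (fun n : ℕ => (m : ℝ)⁻¹ - (n : ℝ)⁻¹) atTop (𝓝 ((m : ℝ)⁻¹)) := by
          have := tendsto_inv_atTop_nhds_zero_nat (𝕜 := ℝ)
          simpa using (tendsto_const_nhds (x := (m : ℝ)⁻¹)).sub this
        refine tendsto_of_tendsto_of_tendsto_of_le_of_le' hlow tendsto_const_nhds ?_ ?_
        · filter_upwards [eventually_ge_atTop 1] with n hn
          have hnR : (0:ℝ) < n := by exact_mod_cast hn
          have hmod : (n : ℝ) < m * (↑(n / m) : ℝ) + m := by
            have h8 := Nat.div_add_mod n m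
            have h9 : n % m < m := Nat.mod_lt n hm0
            have : n < m * (n / m) + m := by omega
            exact_mod_cast this
          have h10 : (n : ℝ) / m - 1 ≤ (↑(n / m) : ℝ) := by
            rw [sub_le_iff_le_add, div_le_iff₀ hmR]
            nlinarith [hmod]
          have h11 : (m : ℝ)⁻¹ - (n : ℝ)⁻¹ = ((n : ℝ) / m - 1) * (n : ℝ)⁻¹ := by
            field_simp
          rw [h11]
          exact mul_le_mul_of_nonneg_right h10 (by positivity)
        · filter_upwards [eventually_ge_atTop 1] with n hn
          have hnR : (0:ℝ) < n := by exact_mod_cast hn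
          have hcast : (↑(n / m) : ℝ) ≤ (n : ℝ) / (m : ℝ) := Nat.cast_div_le
          calc (↑(n / m) : ℝ) * (n : ℝ)⁻¹ ≤ ((n : ℝ) / m) * (n : ℝ)⁻¹ :=
                mul_le_mul_of_nonneg_right hcast (by positivity)
            _ = (m : ℝ)⁻¹ := by field_simp
      have h2t : Tendsto (fun n : ℕ => (2:ℝ) ^ ((n : ℝ)⁻¹)) atTop (𝓝 1) := by
        have hc : ContinuousAt (fun t : ℝ => (2:ℝ) ^ t) 0 :=
          Real.continuousAt_const_rpow (by norm_num)
        have := hc.tendsto.comp (tendsto_inv_atTop_nhds_zero_nat (𝕜 := ℝ))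
        simpa [Function.comp_def] using this
      have hct : Tendsto (fun n : ℕ => (r + ε) ^ ((↑(n / m) : ℝ) * (n : ℝ)⁻¹)) atTop
          (𝓝 ((r + ε) ^ ((m : ℝ)⁻¹))) := by
        have hc : ContinuousAt (fun t : ℝ => (r + ε) ^ t) ((m : ℝ)⁻¹) :=
          Real.continuousAt_const_rpow hrε.ne'
        exact hc.tendsto.comp hexp
      have := (h2t.mul hct)
      rw [one_mul] at this
      exact Tendsto.congr' (heq.mono fun n h => h.symm) this
    have h6 : L ≤ limsup (fun n : ℕ => (2 * (r + ε) ^ (n / m)) ^ ((n : ℝ)⁻¹)) atTop := by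
      refine limsup_le_limsup h4 ?_ h5.isBoundedUnder_le
      exact IsBoundedUnder.isCoboundedUnder_le
        ⟨0, Filter.eventually_map.mpr (Eventually.of_forall fun n => Real.rpow_nonneg (hf0 n) _)⟩
    rw [h5.limsup_eq] at h6
    exact h6
  -- conclude
  have hpowm : L ^ m ≤ r := by
    refine le_of_forall_pos_le_add fun ε hε => ?_
    have h1 := hbound ε hε
    have hrε : (0:ℝ) ≤ r + ε := by linarith
    calc L ^ m ≤ ((r + ε) ^ ((m : ℝ)⁻¹)) ^ m := pow_le_pow_left₀ hL0 h1 m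
      _ = r + ε := by
          rw [← Real.rpow_natCast ((r + ε) ^ ((m : ℝ)⁻¹)) m, ← Real.rpow_mul hrε,
            inv_mul_cancel₀ (ne_of_gt hmR), Real.rpow_one]
  have hfinal : L ≤ r ^ ((m : ℝ)⁻¹) := by
    have h1 : L = (L ^ m) ^ ((m : ℝ)⁻¹) := by
      rw [← Real.rpow_natCast L m, ← Real.rpow_mul hL0, mul_inv_cancel₀ (ne_of_gt hmR),
        Real.rpow_one]
    rw [h1]
    exact Real.rpow_le_rpow (pow_nonneg hL0 m) hpowm (by positivity)
  exact hfinal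

end main
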